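/- Let G and F be proper, point-separating complete subspaces of [-∞,∞]^X and [-∞,∞]^Y respectively, and let J : F → G be a (max,+)-isomorphism. If J({e'_y + λ' : y ∈ Y, λ' ∈ [-∞,∞]}) = {e_x + λ : x ∈ X, λ ∈ [-∞,∞]}, then there exist g : X → ℝ and a bijection φ : X → Y such that Jf(x) = g(x) + f(φ(x)) for all f ∈ F and x ∈ X; moreover this representation (g, φ) is unique, and conversely every map of this form (with the required stability of G and F under the induced translations) is a (max,+)-isomorphism. -/

import Mathlib

/-- `G` is stable under arbitrary pointwise suprema. -/
def SupStable {X : Type*} (G : Set (X → EReal)) : Prop :=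
  ∀ S : Set (X → EReal), S ⊆ G → (fun x => ⨆ f ∈ S, f x) ∈ G

/-- A complete subspace: stable under arbitrary suprema and addition of real scalars. -/
def CompleteSubspace {X : Type*} (G : Set (X → EReal)) : Prop :=
  SupStable G ∧ ∀ g ∈ G, ∀ l : ℝ, (fun x => g x + (l : EReal)) ∈ G

/-- `G` is proper: at every point some function of `G` takes a finite value. -/
def ProperAt {X : Type*} (G : Set (X → EReal)) : Prop :=
  ∀ x : X, ∃ g ∈ G, g x ≠ ⊤ ∧ g x ≠ ⊥

/-- `G` is point separating. -/
def Separating {X : Type*} (G : Set (X → EReal)) : Prop :=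
  ∀ x x' : X, x ≠ x' → ∃ g₁ ∈ G, ∃ g₂ ∈ G, ∃ a₁ b₁ a₂ b₂ : ℝ,
    g₁ x = (a₁ : EReal) ∧ g₁ x' = (b₁ : EReal) ∧ g₂ x = (a₂ : EReal) ∧ g₂ x' = (b₂ : EReal) ∧
    a₁ - b₁ ≠ a₂ - b₂

/-- `e_x = sup { u ∈ G | u(x) ≤ 0 }`. -/
noncomputable def eFun {X : Type*} (G : Set (X → EReal)) (x : X) : X → EReal :=
  fun z => ⨆ u ∈ {u | u ∈ G ∧ u x ≤ 0}, u z

/-- `J` is a (max,+)-isomorphism from `F` onto `G` with inverse `J'`. -/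
def MaxPlusIso {X Y : Type*} (F : Set (Y → EReal)) (G : Set (X → EReal))
    (J : (Y → EReal) → (X → EReal)) (J' : (X → EReal) → (Y → EReal)) : Prop :=
  (∀ f ∈ F, J f ∈ G) ∧ (∀ h ∈ G, J' h ∈ F) ∧
  (∀ f ∈ F, J' (J f) = f) ∧ (∀ h ∈ G, J (J' h) = h) ∧
  (∀ f ∈ F, ∀ f' ∈ F, J (f ⊔ f') = J f ⊔ J f') ∧
  (∀ f ∈ F, ∀ l : ℝ, J (fun y => f y + (l : EReal)) = fun x => J f x + (l : EReal))

/-!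
For `h ∈ G` the value `h x` is recovered from the order of `G` through the functions `e_x`:
`h x ≤ λ ↔ h ≤ e_x + λ`. A (max,+)-isomorphism is an order isomorphism commuting with real
shifts; once it sends each `e'_y` to `e_{τ y} + m y` with `m y` real and `τ` bijective, this
characterisation of evaluation is carried from `x` to `τ⁻¹ x`, which forces
`J f x = m (τ⁻¹ x) + f (τ⁻¹ x)`. Point separation makes `(x, λ) ↦ e_x + λ` injective, which
gives both the bijectivity of `τ` and the uniqueness of the representation.
-/

open Function

namespace EReal

theorem eq_of_forall_le_coe_iff {s t : EReal} (h : ∀ r : ℝ, s ≤ r ↔ t ≤ r) : s = t :=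
  le_antisymm (le_of_forall_lt_iff_le.1 fun r hr => (h r).2 hr.le)
    (le_of_forall_lt_iff_le.1 fun r hr => (h r).1 hr.le)

theorem coe_add_le_coe_iff {a l : ℝ} {t : EReal} : (a : EReal) + t ≤ l ↔ t ≤ ↑(l - a) := by
  rw [← (addLECancellable_coe a).add_le_add_iff_left (c := ↑(l - a)), ← coe_add, add_sub_cancel]

theorem coe_neg_add_cancel_left (a : ℝ) (t : EReal) : ((-a : ℝ) : EReal) + (a + t) = t := by
  rw [← add_assoc, ← coe_add, neg_add_cancel, coe_zero, zero_add]

theorem iSup_add_coe (t : EReal) : ⨆ r : ℝ, t + r = t + ⊤ := by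
  induction t using EReal.rec with
  | bot => simp
  | top => simp
  | coe s =>
    rw [coe_add_top]
    refine top_unique (le_of_forall_lt_iff_le.1 fun z hz => absurd hz (not_lt.2 ?_))
    exact le_iSup_of_le (z - s) (by rw [← coe_add, add_sub_cancel])

end EReal

section Subspace

variable {X : Type*} {G : Set (X → EReal)}

theorem SupStable.sup_mem (hG : SupStable G) {f f' : X → EReal} (hf : f ∈ G) (hf' : f' ∈ G) :
    f ⊔ f' ∈ G := by
  convert hG {f, f'} (Set.insert_subset hf (Set.singleton_subset_iff.2 hf')) using 1
  funext x
  simp [iSup_or, iSup_sup_eq]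

theorem SupStable.bot_mem (hG : SupStable G) : (⊥ : X → EReal) ∈ G := by
  convert hG ∅ (Set.empty_subset _) using 1
  funext x
  simp

theorem CompleteSubspace.add_mem (hG : CompleteSubspace G) {f : X → EReal} (hf : f ∈ G)
    (l : EReal) : (fun x => f x + l) ∈ G := by
  induction l using EReal.rec with
  | bot =>
    simp only [EReal.add_bot]
    exact hG.1.bot_mem
  | coe r => exact hG.2 f hf r
  | top =>
    convert hG.1 (Set.range fun r : ℝ => fun x => f x + r) (Set.range_subset_iff.2 (hG.2 f hf))
      using 1
    funext x
    rw [iSup_range, EReal.iSup_add_coe]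

theorem Separating.eq_of_forall_coe_add_apply_eq (hGp : ProperAt G) (hGs : Separating G)
    {x x' : X} {c c' : ℝ} (h : ∀ u ∈ G, (c : EReal) + u x = c' + u x') : x = x' ∧ c = c' := by
  obtain rfl | hne := eq_or_ne x x'
  · obtain ⟨u, hu, htop, hbot⟩ := hGp x
    have hcu := h u hu
    rw [← EReal.coe_toReal htop hbot, ← EReal.coe_add, ← EReal.coe_add,
      EReal.coe_eq_coe_iff] at hcu
    exact ⟨rfl, by linarith⟩
  · obtain ⟨u₁, hu₁, u₂, hu₂, a₁, b₁, a₂, b₂, hx₁, hx₁', hx₂, hx₂', hab⟩ := hGs x x' hne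
    have h₁ := h u₁ hu₁
    have h₂ := h u₂ hu₂
    rw [hx₁, hx₁'] at h₁
    rw [hx₂, hx₂'] at h₂
    norm_cast at h₁ h₂
    exact absurd (by linarith) hab

theorem eFun_mem (hG : SupStable G) (x : X) : eFun G x ∈ G :=
  hG _ fun _ hu => hu.1

theorem le_eFun {u : X → EReal} (hu : u ∈ G) {x : X} (hx : u x ≤ 0) : u ≤ eFun G x :=
  fun z => le_biSup (f := fun u : X → EReal => u z) ⟨hu, hx⟩

theorem le_eFun_add_of_apply_le (hG : CompleteSubspace G) {u : X → EReal} (hu : u ∈ G) {x : X}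
    {l : ℝ} (hx : u x ≤ l) : u ≤ fun z => eFun G x z + l := by
  have hux : u x + ((-l : ℝ) : EReal) ≤ 0 := by
    calc u x + ((-l : ℝ) : EReal) ≤ l + ((-l : ℝ) : EReal) := add_le_add hx le_rfl
      _ = 0 := by rw [← EReal.coe_add, add_neg_cancel, EReal.coe_zero]
  intro z
  calc u z = u z + ((-l : ℝ) : EReal) + l := by
        rw [add_assoc, ← EReal.coe_add, neg_add_cancel, EReal.coe_zero, add_zero]
    _ ≤ eFun G x z + l := add_le_add (le_eFun (hG.2 u hu (-l)) hux z) le_rfl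

theorem eFun_self (hG : CompleteSubspace G) (hGp : ProperAt G) (x : X) : eFun G x x = 0 := by
  refine le_antisymm (iSup₂_le fun u hu => hu.2) ?_
  obtain ⟨u, hu, htop, hbot⟩ := hGp x
  have hux := le_eFun_add_of_apply_le hG hu (EReal.coe_toReal htop hbot).ge x
  rw [← EReal.coe_toReal htop hbot] at hux
  exact (EReal.addLECancellable_coe _).add_le_add_iff_left.1 (by rwa [add_zero, add_comm])

theorem apply_le_coe_iff_le_eFun_add (hG : CompleteSubspace G) (hGp : ProperAt G)
    {u : X → EReal} (hu : u ∈ G) (x : X) (l : ℝ) :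
    u x ≤ l ↔ u ≤ fun z => eFun G x z + l :=
  ⟨le_eFun_add_of_apply_le hG hu, fun hle => by simpa [eFun_self hG hGp] using hle x⟩

theorem eFun_add_injective (hG : CompleteSubspace G) (hGp : ProperAt G) (hGs : Separating G)
    {x x' : X} {c c' : ℝ} (h : (fun z => eFun G x z + c) = fun z => eFun G x' z + c') :
    x = x' ∧ c = c' := by
  have hshift : ∀ r : ℝ, (fun z => eFun G x z + ↑(r - c')) = fun z => eFun G x' z + ↑(r - c) := by
    intro r
    funext z
    have hz := congrArg (· + ((r - c - c' : ℝ) : EReal)) (congrFun h z)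
    simp only [add_assoc, ← EReal.coe_add] at hz
    convert hz using 3 <;> ring
  have hvalues : ∀ u ∈ G, (c' : EReal) + u x = c + u x' := fun u hu =>
    EReal.eq_of_forall_le_coe_iff fun r => by
      rw [EReal.coe_add_le_coe_iff, EReal.coe_add_le_coe_iff,
        apply_le_coe_iff_le_eFun_add hG hGp hu, apply_le_coe_iff_le_eFun_add hG hGp hu, hshift]
  obtain ⟨hx, hc⟩ := hGs.eq_of_forall_coe_add_apply_eq hGp hvalues
  exact ⟨hx, hc.symm⟩

end Subspace

namespace MaxPlusIso

variable {X Y : Type*} {F : Set (Y → EReal)} {G : Set (X → EReal)}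
  {J : (Y → EReal) → (X → EReal)} {J' : (X → EReal) → (Y → EReal)}

theorem apply_mem (hJ : MaxPlusIso F G J J') {f : Y → EReal} (hf : f ∈ F) : J f ∈ G :=
  hJ.1 f hf

theorem symm_apply_mem (hJ : MaxPlusIso F G J J') {h : X → EReal} (hh : h ∈ G) : J' h ∈ F :=
  hJ.2.1 h hh

theorem symm_apply_apply (hJ : MaxPlusIso F G J J') {f : Y → EReal} (hf : f ∈ F) :
    J' (J f) = f :=
  hJ.2.2.1 f hf

theorem apply_symm_apply (hJ : MaxPlusIso F G J J') {h : X → EReal} (hh : h ∈ G) :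
    J (J' h) = h :=
  hJ.2.2.2.1 h hh

theorem map_sup (hJ : MaxPlusIso F G J J') {f f' : Y → EReal} (hf : f ∈ F) (hf' : f' ∈ F) :
    J (f ⊔ f') = J f ⊔ J f' :=
  hJ.2.2.2.2.1 f hf f' hf'

theorem map_add_coe (hJ : MaxPlusIso F G J J') {f : Y → EReal} (hf : f ∈ F) (l : ℝ) :
    J (fun y => f y + l) = fun x => J f x + l :=
  hJ.2.2.2.2.2 f hf l

theorem injOn (hJ : MaxPlusIso F G J J') : Set.InjOn J F := fun f hf f' hf' h => by
  rw [← hJ.symm_apply_apply hf, ← hJ.symm_apply_apply hf', h]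

theorem symm (hJ : MaxPlusIso F G J J') (hF : CompleteSubspace F) : MaxPlusIso G F J' J := by
  refine ⟨fun h => hJ.symm_apply_mem, fun f => hJ.apply_mem, fun h => hJ.apply_symm_apply,
    fun f => hJ.symm_apply_apply, fun h hh h' hh' => ?_, fun h hh l => ?_⟩
  · have hJ'h := hJ.symm_apply_mem hh
    have hJ'h' := hJ.symm_apply_mem hh'
    rw [← hJ.symm_apply_apply (hF.1.sup_mem hJ'h hJ'h'), hJ.map_sup hJ'h hJ'h',
      hJ.apply_symm_apply hh, hJ.apply_symm_apply hh']
  · have hJ'h := hJ.symm_apply_mem hh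
    rw [← hJ.symm_apply_apply (hF.2 _ hJ'h l), hJ.map_add_coe hJ'h, hJ.apply_symm_apply hh]

theorem apply_le_apply_iff (hJ : MaxPlusIso F G J J') (hF : SupStable F) {f f' : Y → EReal}
    (hf : f ∈ F) (hf' : f' ∈ F) : J f ≤ J f' ↔ f ≤ f' := by
  rw [← sup_eq_right, ← hJ.map_sup hf hf', hJ.injOn.eq_iff (hF.sup_mem hf hf') hf', sup_eq_right]

theorem exists_coe_of_apply_eq_add (hJ : MaxPlusIso F G J J') (hF : CompleteSubspace F)
    {a : Y → EReal} (ha : a ∈ F) {y : Y} {c : ℝ} (hay : a y = c) {b : X → EReal} {m : EReal}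
    (h : J a = fun x => b x + m) : ∃ r : ℝ, m = r := by
  induction m using EReal.rec with
  | bot =>
    have hle : J a ≤ J ⊥ := by
      rw [h]
      intro x
      simp
    have := (hJ.apply_le_apply_iff hF.1 ha hF.1.bot_mem).1 hle y
    simp [hay] at this
  | coe r => exact ⟨r, rfl⟩
  | top =>
    have hshift : J (fun z => a z + (1 : ℝ)) = J a := by
      rw [hJ.map_add_coe ha, h]
      funext x
      rw [add_assoc, EReal.top_add_coe]
    have := congrFun (hJ.injOn (hF.2 a ha 1) ha hshift) y
    rw [hay, ← EReal.coe_add, EReal.coe_eq_coe_iff] at this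
    linarith

theorem exists_apply_eFun_eq (hJ : MaxPlusIso F G J J') (hF : CompleteSubspace F)
    (hFp : ProperAt F) (h : ∀ y, ∃ x, ∃ l : EReal, J (eFun F y) = fun z => eFun G x z + l) :
    ∃ (τ : Y → X) (m : Y → ℝ), ∀ y, J (eFun F y) = fun z => eFun G (τ y) z + m y := by
  choose τ l hτ using h
  choose m hm using fun y => hJ.exists_coe_of_apply_eq_add hF (eFun_mem hF.1 y)
    (c := 0) (by rw [eFun_self hF hFp, EReal.coe_zero]) (hτ y)
  exact ⟨τ, m, fun y => hm y ▸ hτ y⟩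

section Representation

variable {τ : Y → X} {m : Y → ℝ} (hτ : ∀ y, J (eFun F y) = fun z => eFun G (τ y) z + m y)
include hτ

theorem apply_eFun_add (hJ : MaxPlusIso F G J J') (hF : SupStable F) (y : Y) (r : ℝ) :
    J (fun z => eFun F y z + r) = fun z => eFun G (τ y) z + ↑(m y + r) := by
  rw [hJ.map_add_coe (eFun_mem hF y), hτ]
  simp only [EReal.coe_add, add_assoc]

theorem injective_of_apply_eFun_eq (hJ : MaxPlusIso F G J J') (hF : CompleteSubspace F)
    (hFp : ProperAt F) (hFs : Separating F) : Injective τ := by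
  intro y y' hyy'
  have h := hJ.injOn (hF.2 _ (eFun_mem hF.1 y) (m y' - m y)) (hF.2 _ (eFun_mem hF.1 y') 0) (by
    rw [hJ.apply_eFun_add hτ hF.1, hJ.apply_eFun_add hτ hF.1, hyy', add_sub_cancel, add_zero])
  exact (eFun_add_injective hF hFp hFs h).1

theorem surjective_of_apply_eFun_eq (hJ : MaxPlusIso F G J J') (hF : CompleteSubspace F)
    (hG : CompleteSubspace G) (hGp : ProperAt G) (hGs : Separating G)
    (h : ∀ x, ∃ y, ∃ l : EReal, J (fun z => eFun F y z + l) = eFun G x) : Surjective τ := by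
  intro x
  obtain ⟨y, l, hyl⟩ := h x
  have hJ'e : J' (eFun G x) = fun z => eFun F y z + l := by
    rw [← hyl, hJ.symm_apply_apply (hF.add_mem (eFun_mem hF.1 y) l)]
  obtain ⟨r, rfl⟩ := (hJ.symm hF).exists_coe_of_apply_eq_add hG (eFun_mem hG.1 x) (c := 0)
    (by rw [eFun_self hG hGp, EReal.coe_zero]) hJ'e
  refine ⟨y, (eFun_add_injective hG hGp hGs (c := m y + r) (c' := 0) ?_).1⟩
  rw [← hJ.apply_eFun_add hτ hF.1, hyl]
  simp

theorem apply_eq_of_apply_eFun_eq (hJ : MaxPlusIso F G J J') (hF : CompleteSubspace F)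
    (hG : CompleteSubspace G) (hFp : ProperAt F) (hGp : ProperAt G) {φ : X → Y}
    (hφ : RightInverse φ τ) {f : Y → EReal} (hf : f ∈ F) (x : X) :
    J f x = m (φ x) + f (φ x) := by
  refine EReal.eq_of_forall_le_coe_iff fun l => ?_
  rw [apply_le_coe_iff_le_eFun_add hG hGp (hJ.apply_mem hf) x l, EReal.coe_add_le_coe_iff,
    apply_le_coe_iff_le_eFun_add hF hFp hf (φ x),
    ← hJ.apply_le_apply_iff hF.1 hf (hF.2 _ (eFun_mem hF.1 _) _), hJ.apply_eFun_add hτ hF.1, hφ x,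
    add_sub_cancel]

end Representation

end MaxPlusIso

theorem maxPlusIso_add_comp {X Y : Type*} {F : Set (Y → EReal)} {G : Set (X → EReal)}
    {g : X → ℝ} {φ : X → Y} {ψ : Y → X} (hl : LeftInverse ψ φ) (hr : RightInverse ψ φ)
    (hFG : ∀ f ∈ F, (fun x => (g x : EReal) + f (φ x)) ∈ G)
    (hGF : ∀ h ∈ G, (fun y => ((-g (ψ y) : ℝ) : EReal) + h (ψ y)) ∈ F) :
    MaxPlusIso F G (fun f x => g x + f (φ x)) (fun h y => ((-g (ψ y) : ℝ) : EReal) + h (ψ y)) := by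
  refine ⟨hFG, hGF, fun f _ => funext fun y => ?_, fun h _ => funext fun x => ?_,
    fun f _ f' _ => funext fun x => (max_add_add_left _ _ _).symm,
    fun f _ l => funext fun x => (add_assoc _ _ _).symm⟩
  · simp only [hr y, EReal.coe_neg_add_cancel_left]
  · simpa [hl x] using EReal.coe_neg_add_cancel_left (-g x) (h x)

theorem stmt8 {X Y : Type*} (F : Set (Y → EReal)) (G : Set (X → EReal))
    (hF : CompleteSubspace F) (hG : CompleteSubspace G)
    (hFp : ProperAt F) (hFs : Separating F) (hGp : ProperAt G) (hGs : Separating G)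
    (J : (Y → EReal) → (X → EReal)) (J' : (X → EReal) → (Y → EReal))
    (hJ : MaxPlusIso F G J J') :
    -- (i) ⇒ (ii): if J maps the family {e'_y + λ'} onto the family {e_x + λ} then
    -- J f = g + f ∘ φ with a bijective reparametrization and the induced stabilities
    ((∀ (y : Y) (l : EReal), ∃ (x : X) (m : EReal),
        J (fun z => eFun F y z + l) = fun z => eFun G x z + m) →
     (∀ (x : X) (m : EReal), ∃ (y : Y) (l : EReal),
        J (fun z => eFun F y z + l) = fun z => eFun G x z + m) →
      ∃ (g : X → ℝ) (φ : X → Y) (ψ : Y → X),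
        Function.LeftInverse ψ φ ∧ Function.RightInverse ψ φ ∧
        (∀ f ∈ F, ∀ x, J f x = (g x : EReal) + f (φ x)) ∧
        (∀ f ∈ F, (fun x => (g x : EReal) + f (φ x)) ∈ G) ∧
        (∀ h ∈ G, (fun y => (-(g (ψ y)) : ℝ) + h (ψ y)) ∈ F)) ∧
    -- uniqueness of the representation (g, φ)
    (∀ (g g' : X → ℝ) (φ φ' : X → Y), Function.Bijective φ → Function.Bijective φ' →
      (∀ f ∈ F, ∀ x, J f x = (g x : EReal) + f (φ x)) →
      (∀ f ∈ F, ∀ x, J f x = (g' x : EReal) + f (φ' x)) →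
      g = g' ∧ φ = φ') ∧
    -- conversely, every map of this form is a (max,+)-isomorphism
    (∀ (g : X → ℝ) (φ : X → Y) (ψ : Y → X),
      Function.LeftInverse ψ φ → Function.RightInverse ψ φ →
      (∀ f ∈ F, (fun x => (g x : EReal) + f (φ x)) ∈ G) →
      (∀ h ∈ G, (fun y => (-(g (ψ y)) : ℝ) + h (ψ y)) ∈ F) →
      MaxPlusIso F G (fun f => fun x => (g x : EReal) + f (φ x))
        (fun h => fun y => (-(g (ψ y)) : ℝ) + h (ψ y))) := by
  refine ⟨fun h₁ h₂ => ?_, fun g g' φ φ' _ _ hg hg' => ?_,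
    fun g φ ψ hl hr hFG hGF => maxPlusIso_add_comp hl hr hFG hGF⟩
  · obtain ⟨τ, m, hτ⟩ := hJ.exists_apply_eFun_eq hF hFp fun y => by simpa using h₁ y 0
    obtain ⟨φ, hφ⟩ := (hJ.surjective_of_apply_eFun_eq hτ hF hG hGp hGs fun x => by
      simpa using h₂ x 0).hasRightInverse
    have hφ' := hφ.rightInverse_of_injective (hJ.injective_of_apply_eFun_eq hτ hF hFp hFs)
    have hrep := fun f hf => hJ.apply_eq_of_apply_eFun_eq hτ hF hG hFp hGp hφ (f := f) hf
    refine ⟨m ∘ φ, φ, τ, hφ, hφ', hrep, fun f hf => ?_, fun h hh => ?_⟩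
    · convert hJ.apply_mem hf using 1
      exact (funext (hrep f hf)).symm
    · convert hJ.symm_apply_mem hh using 1
      funext y
      have hy := hrep _ (hJ.symm_apply_mem hh) (τ y)
      rw [hJ.apply_symm_apply hh, hφ' y] at hy
      rw [hy, comp_apply, hφ' y, EReal.coe_neg_add_cancel_left]
  · have hpoint := fun x => hFs.eq_of_forall_coe_add_apply_eq hFp fun f hf =>
      (hg f hf x).symm.trans (hg' f hf x)
    exact ⟨funext fun x => (hpoint x).2, funext fun x => (hpoint x).1⟩
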